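/- Let g, h be Schwartz functions on ℝ², A = diag(4,2), B = [[1,1],[0,1]]. Write g_{A^(-j)B^(-ℓ)}(x) = |det A|^j g(B^ℓ A^j x) and h_Q(x) = 2^(3i/2) h(B^m A^i x - n) for Q identified with (i,m,n), with x_Q = A^(-i) B^(-m) n and |Q| = 2^(-3i). Then for i ∈ {j-1, j, j+1} with i,j ≥ 0, |ℓ| ≤ 2^j, |m| ≤ 2^i, and every N > 2, there exists C_N > 0 such that |(g_{A^(-j)B^(-ℓ)} ∗ h_Q)(x)| ≤ C_N |Q|^(-1/2) (1 + 2^i |x - x_Q|)^(-N) for all x ∈ ℝ². -/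

import Mathlib

open MeasureTheory Metric Set Filter
noncomputable section

/-- `ℝ²` with the Euclidean norm. -/
abbrev V2 := EuclideanSpace ℝ (Fin 2)

/-- the vector `(a, b) ∈ ℝ²`. -/
def v2 (a b : ℝ) : V2 := (WithLp.equiv 2 (Fin 2 → ℝ)).symm ![a, b]

/-- The action of `B^ℓ A^j` on `ℝ²` for `A = diag(4,2)`, `B = [[1,1],[0,1]]`:
`x ↦ (2^(2j) x₁ + 2^j ℓ x₂, 2^j x₂)`. -/
def BA (j : ℕ) (ℓ : ℤ) (x : V2) : V2 :=
  v2 ((2:ℝ)^(2*j) * x 0 + (2:ℝ)^j * (ℓ:ℝ) * x 1) ((2:ℝ)^j * x 1)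

/-- The action of `A^(-j) B^(-ℓ)` on `ℝ²` (the inverse of `BA j ℓ`). -/
def invBA (j : ℕ) (ℓ : ℤ) (x : V2) : V2 :=
  v2 (((2:ℝ)^(2*j))⁻¹ * (x 0 - (ℓ:ℝ) * x 1)) (((2:ℝ)^j)⁻¹ * x 1)

/-- embedding of `ℤ²` into `ℝ²`. -/
def vi (k : ℤ × ℤ) : V2 := v2 (k.1 : ℝ) (k.2 : ℝ)

/-- `g_{A^(-j)B^(-ℓ)}(x) = |det A|^j g(B^ℓ A^j x)`, with `|det A| = 8`. -/
def dilA (g : V2 → ℂ) (j : ℕ) (ℓ : ℤ) (x : V2) : ℂ :=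
  ((8:ℝ)^j : ℝ) * g (BA j ℓ x)

/-- `h_Q(x) = 2^(3i/2) h(B^m A^i x - n)` for `Q = (i,m,n)`. -/
def shemel (h : V2 → ℂ) (i : ℕ) (m : ℤ) (n : ℤ × ℤ) (x : V2) : ℂ :=
  ((2:ℝ) ^ (3*(i:ℝ)/2) : ℝ) * h (BA i m x - vi n)

/-!
Both Schwartz functions decay faster than any power. The geometric input is
`1 + 2^i |x - x_Q| ≤ 6 (1 + |B^m A^i (x - t) - n|) (1 + |B^ℓ A^j t|)`, which comes from
`2^k |z| ≤ 3 |B^ℓ A^k z|` whenever `|ℓ| ≤ 2^k`, applied to `z = x - t - x_Q` and `z = t`,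
and from `2^i ≤ 2 · 2^j`. Spending `N` powers of decay of each factor on this product leaves
three more powers of decay of `g` for integrability on `ℝ²`, and `∫ 8^j w(B^ℓ A^j t) dt = ∫ w`
is independent of the scale.
-/

section LinearChangeOfVariables

variable {E F : Type*} [NormedAddCommGroup E] [NormedSpace ℝ E] [MeasurableSpace E] [BorelSpace E]
  [FiniteDimensional ℝ E] [NormedAddCommGroup F]
  (μ : Measure E) [μ.IsAddHaarMeasure] {L : E →ₗ[ℝ] E}

lemma LinearMap.measurableEmbedding_of_det_ne_zero (hL : LinearMap.det L ≠ 0) :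
    MeasurableEmbedding L :=
  (L.equivOfDetNeZero hL).toContinuousLinearEquiv.toHomeomorph.measurableEmbedding

lemma integral_comp_linearMap_of_det_ne_zero [NormedSpace ℝ F] (hL : LinearMap.det L ≠ 0)
    (f : E → F) :
    ∫ x, f (L x) ∂μ = |LinearMap.det L|⁻¹ • ∫ x, f x ∂μ := by
  rw [← (L.measurableEmbedding_of_det_ne_zero hL).integral_map,
    Measure.map_linearMap_addHaar_eq_smul_addHaar μ hL, integral_smul_measure,
    ENNReal.toReal_ofReal (by positivity), abs_inv]

lemma MeasureTheory.Integrable.comp_linearMap_of_det_ne_zero (hL : LinearMap.det L ≠ 0)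
    {f : E → F} (hf : Integrable f μ) : Integrable (fun x => f (L x)) μ := by
  rw [← Function.comp_def, ← (L.measurableEmbedding_of_det_ne_zero hL).integrable_map_iff,
    Measure.map_linearMap_addHaar_eq_smul_addHaar μ hL]
  exact hf.smul_measure ENNReal.ofReal_ne_top

end LinearChangeOfVariables

lemma SchwartzMap.exists_norm_le_one_add_norm_rpow_neg {E F : Type*} [NormedAddCommGroup E]
    [NormedSpace ℝ E] [NormedAddCommGroup F] [NormedSpace ℝ F] (f : SchwartzMap E F) (K : ℝ) :
    ∃ C > 0, ∀ x, ‖f x‖ ≤ C * (1 + ‖x‖) ^ (-K) := by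
  set k := ⌈K⌉₊
  set C := 2 ^ k * (Finset.Iic (k, 0)).sup (fun m => SchwartzMap.seminorm ℝ m.1 m.2) f
  refine ⟨C + 1, by positivity, fun x => ?_⟩
  have hdecay : (1 + ‖x‖) ^ k * ‖f x‖ ≤ C := by
    simpa using SchwartzMap.one_add_le_sup_seminorm_apply (𝕜 := ℝ) (m := (k, 0)) le_rfl le_rfl f x
  calc ‖f x‖ ≤ C * (1 + ‖x‖) ^ (-(k : ℝ)) := by
        rw [Real.rpow_neg (by positivity), Real.rpow_natCast, ← div_eq_mul_inv,
          le_div_iff₀ (by positivity), mul_comm]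
        exact hdecay
    _ ≤ (C + 1) * (1 + ‖x‖) ^ (-K) := by
        gcongr
        exacts [by linarith, le_add_of_nonneg_right (norm_nonneg x), Nat.le_ceil K]

lemma Real.rpow_neg_le_of_le_mul {a b c N : ℝ} (ha : 0 < a) (hc : 0 < c) (hN : 0 ≤ N)
    (h : a ≤ c * b) : b ^ (-N) ≤ c ^ N * a ^ (-N) := by
  have hab : a / c ≤ b := by rwa [div_le_iff₀' hc]
  calc b ^ (-N) ≤ (a / c) ^ (-N) := Real.rpow_le_rpow_of_nonpos (by positivity) hab (by linarith)
    _ = c ^ N * a ^ (-N) := by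
      rw [Real.div_rpow ha.le hc.le, Real.rpow_neg hc.le, div_inv_eq_mul, mul_comm]

lemma norm_convolution_mul_le_integral {𝕜 G : Type*} [RCLike 𝕜] [MeasurableSpace G] [Sub G]
    {μ : Measure G} {f g : G → 𝕜} {x : G} {F : G → ℝ} (hF : Integrable F μ)
    (hfg : ∀ t, ‖f t * g (x - t)‖ ≤ F t) :
    ‖convolution f g (ContinuousLinearMap.mul 𝕜 𝕜) μ x‖ ≤ ∫ t, F t ∂μ := by
  rw [convolution_def]
  exact (norm_integral_le_integral_norm _).trans
    (integral_mono_of_nonneg (.of_forall fun t => norm_nonneg _) hF (.of_forall hfg))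

lemma EuclideanSpace.norm_le_abs_add_abs (z : V2) : ‖z‖ ≤ |z 0| + |z 1| := by
  rw [EuclideanSpace.norm_eq, Fin.sum_univ_two, Real.sqrt_le_left (by positivity)]
  simp only [Real.norm_eq_abs]
  nlinarith [abs_nonneg (z 0), abs_nonneg (z 1)]

lemma BA_apply_zero (j : ℕ) (ℓ : ℤ) (x : V2) :
    BA j ℓ x 0 = (2:ℝ)^(2*j) * x 0 + (2:ℝ)^j * ℓ * x 1 := rfl

lemma BA_apply_one (j : ℕ) (ℓ : ℤ) (x : V2) : BA j ℓ x 1 = (2:ℝ)^j * x 1 := rfl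

def BAlin (j : ℕ) (ℓ : ℤ) : V2 →ₗ[ℝ] V2 :=
  Matrix.toEuclideanLin !![(2:ℝ)^(2*j), 2^j * ℓ; 0, 2^j]

lemma coe_BAlin (j : ℕ) (ℓ : ℤ) : ⇑(BAlin j ℓ) = BA j ℓ := by
  ext x k
  fin_cases k <;> simp [BAlin, BA, v2, Matrix.mulVec, dotProduct, Fin.sum_univ_two]

lemma det_BAlin (j : ℕ) (ℓ : ℤ) : LinearMap.det (BAlin j ℓ) = 8 ^ j := by
  rw [BAlin, Matrix.toEuclideanLin_eq_toLin_orthonormal, LinearMap.det_toLin, Matrix.det_fin_two_of,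
    show (8:ℝ) = 2 ^ 2 * 2 by norm_num, mul_pow, ← pow_mul, mul_comm 2 j]
  ring

lemma BA_sub (j : ℕ) (ℓ : ℤ) (x y : V2) : BA j ℓ (x - y) = BA j ℓ x - BA j ℓ y := by
  simp only [← coe_BAlin, map_sub]

lemma BA_invBA (j : ℕ) (ℓ : ℤ) (y : V2) : BA j ℓ (invBA j ℓ y) = y := by
  ext k
  fin_cases k <;> simp [BA, invBA, v2]; field_simp; ring

lemma two_pow_mul_norm_le_norm_BA {j : ℕ} {ℓ : ℤ} (hℓ : |ℓ| ≤ 2 ^ j) (z : V2) :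
    (2:ℝ)^j * ‖z‖ ≤ 3 * ‖BA j ℓ z‖ := by
  have hℓq : |(ℓ:ℝ)| ≤ 2 ^ j := by rw [← Int.cast_abs]; exact_mod_cast hℓ
  set q : ℝ := 2 ^ j
  set y := BA j ℓ z
  have hq : 1 ≤ q := one_le_pow₀ one_le_two
  have hy0 : |y 0| ≤ ‖y‖ := PiLp.norm_apply_le y 0
  have hy1 : |y 1| ≤ ‖y‖ := PiLp.norm_apply_le y 1
  have hz1 : q * |z 1| = |y 1| := by
    rw [BA_apply_one, abs_mul, abs_of_pos (by positivity : (0:ℝ) < q)]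
  -- `q² z₀ = y₀ - ℓ y₁`, and `|ℓ| ≤ q` costs exactly one factor of `q`
  have hz0 : q * (q * |z 0|) ≤ q * (|y 0| + |y 1|) := by
    have h : q ^ 2 * z 0 = y 0 - ℓ * y 1 := by
      rw [BA_apply_zero, BA_apply_one, pow_mul']; ring
    calc q * (q * |z 0|) = |y 0 - ℓ * y 1| := by
          rw [← h, abs_mul, abs_of_pos (by positivity : (0:ℝ) < q ^ 2)]; ring
      _ ≤ |y 0| + |(ℓ:ℝ)| * |y 1| := by rw [← abs_mul]; exact abs_sub _ _
      _ ≤ q * |y 0| + q * |y 1| := by gcongr; nlinarith [abs_nonneg (y 0)]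
      _ = q * (|y 0| + |y 1|) := by ring
  have hz0' := le_of_mul_le_mul_left hz0 (by positivity)
  calc q * ‖z‖ ≤ q * |z 0| + q * |z 1| := by
        rw [← mul_add]; gcongr; exact EuclideanSpace.norm_le_abs_add_abs z
    _ ≤ 3 * ‖y‖ := by linarith

lemma one_add_two_pow_mul_norm_sub_le {i j : ℕ} {ℓ m : ℤ} (n : ℤ × ℤ) (hij : i ≤ j + 1)
    (hℓ : |ℓ| ≤ 2 ^ j) (hm : |m| ≤ 2 ^ i) (x t : V2) :
    1 + (2:ℝ)^i * ‖x - invBA i m (vi n)‖ ≤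
      6 * ((1 + ‖BA i m (x - t) - vi n‖) * (1 + ‖BA j ℓ t‖)) := by
  have hfar : (2:ℝ)^i * ‖x - t - invBA i m (vi n)‖ ≤ 3 * ‖BA i m (x - t) - vi n‖ := by
    simpa only [BA_sub, BA_invBA] using two_pow_mul_norm_le_norm_BA hm (x - t - invBA i m (vi n))
  have hnear : (2:ℝ)^i * ‖t‖ ≤ 6 * ‖BA j ℓ t‖ := by
    have hij' : (2:ℝ)^i ≤ 2 * 2^j := by
      rw [← pow_succ']; exact pow_le_pow_right₀ one_le_two hij
    nlinarith [two_pow_mul_norm_le_norm_BA hℓ t, norm_nonneg t]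
  have htri : ‖x - invBA i m (vi n)‖ ≤ ‖x - t - invBA i m (vi n)‖ + ‖t‖ := by
    simpa only [sub_right_comm x t, sub_add_cancel] using norm_add_le (x - t - invBA i m (vi n)) t
  nlinarith [norm_nonneg (BA i m (x - t) - vi n), norm_nonneg (BA j ℓ t),
    mul_le_mul_of_nonneg_left htri (by positivity : (0:ℝ) ≤ 2^i)]

lemma integral_eight_pow_mul_comp_BA (j : ℕ) (ℓ : ℤ) (f : V2 → ℝ) :
    ∫ t, (8:ℝ)^j * f (BA j ℓ t) = ∫ s, f s := by
  have hdet : LinearMap.det (BAlin j ℓ) ≠ 0 := by rw [det_BAlin]; positivity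
  rw [integral_const_mul, ← coe_BAlin, integral_comp_linearMap_of_det_ne_zero _ hdet, det_BAlin,
    smul_eq_mul, abs_of_pos (by positivity), mul_inv_cancel_left₀ (by positivity)]

lemma MeasureTheory.Integrable.comp_BA {f : V2 → ℝ} (hf : Integrable f) (j : ℕ) (ℓ : ℤ) :
    Integrable (fun t => f (BA j ℓ t)) := by
  rw [← coe_BAlin]
  exact hf.comp_linearMap_of_det_ne_zero _ (by rw [det_BAlin]; positivity)

lemma norm_dilA_mul_shemel_le {g h : V2 → ℂ} {Cg Ch N : ℝ} (hN : 0 ≤ N)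
    (hg : ∀ y, ‖g y‖ ≤ Cg * (1 + ‖y‖) ^ (-(N + 3)))
    (hh : ∀ y, ‖h y‖ ≤ Ch * (1 + ‖y‖) ^ (-N))
    {i j : ℕ} {ℓ m : ℤ} (n : ℤ × ℤ) (hij : i ≤ j + 1) (hℓ : |ℓ| ≤ 2 ^ j) (hm : |m| ≤ 2 ^ i)
    (x t : V2) :
    ‖dilA g j ℓ t * shemel h i m n (x - t)‖ ≤
      Cg * Ch * 6 ^ N * (2:ℝ) ^ (3 * (i:ℝ) / 2) * (1 + (2:ℝ)^i * ‖x - invBA i m (vi n)‖) ^ (-N) *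
        ((8:ℝ)^j * (1 + ‖BA j ℓ t‖) ^ (-(3:ℝ))) := by
  have hCg : 0 ≤ Cg := nonneg_of_mul_nonneg_left ((norm_nonneg _).trans (hg 0)) (by positivity)
  have hCh : 0 ≤ Ch := nonneg_of_mul_nonneg_left ((norm_nonneg _).trans (hh 0)) (by positivity)
  set S := ‖BA j ℓ t‖
  set r := ‖BA i m (x - t) - vi n‖
  set W := (2:ℝ)^i * ‖x - invBA i m (vi n)‖
  set D := (2:ℝ) ^ (3 * (i:ℝ) / 2)
  have hS : 0 < 1 + S := by positivity
  have hr : 0 < 1 + r := by positivity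
  have hdecay : ((1 + r) * (1 + S)) ^ (-N) ≤ 6 ^ N * (1 + W) ^ (-N) :=
    Real.rpow_neg_le_of_le_mul (by positivity) (by norm_num) hN
      (one_add_two_pow_mul_norm_sub_le n hij hℓ hm x t)
  have hsplit : (1 + S) ^ (-(N + 3)) * (1 + r) ^ (-N) =
      ((1 + r) * (1 + S)) ^ (-N) * (1 + S) ^ (-(3:ℝ)) := by
    rw [Real.mul_rpow hr.le hS.le, neg_add, Real.rpow_add hS]; ring
  have hnorm : ‖dilA g j ℓ t * shemel h i m n (x - t)‖ =
      (8:ℝ)^j * D * (‖g (BA j ℓ t)‖ * ‖h (BA i m (x - t) - vi n)‖) := by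
    rw [dilA, shemel, norm_mul, norm_mul, norm_mul, Complex.norm_real, Complex.norm_real,
      Real.norm_of_nonneg (by positivity), Real.norm_of_nonneg (by positivity)]
    ring
  calc ‖dilA g j ℓ t * shemel h i m n (x - t)‖
      ≤ (8:ℝ)^j * D * ((Cg * (1 + S) ^ (-(N + 3))) * (Ch * (1 + r) ^ (-N))) := by
        rw [hnorm]
        gcongr
        exacts [hg _, hh _]
    _ = (8:ℝ)^j * D * Cg * Ch * (((1 + r) * (1 + S)) ^ (-N) * (1 + S) ^ (-(3:ℝ))) := by
        rw [← hsplit]; ring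
    _ ≤ (8:ℝ)^j * D * Cg * Ch * (6 ^ N * (1 + W) ^ (-N) * (1 + S) ^ (-(3:ℝ))) := by
        gcongr
    _ = _ := by ring

/-- for Schwartz `g, h`, neighbouring scales `i ∈ {j-1,j,j+1}` and `N > 2`,
`|(g_{A^(-j)B^(-ℓ)} ∗ h_Q)(x)| ≤ C_N |Q|^(-1/2) (1+2^i|x-x_Q|)^(-N)`
where `|Q|^(-1/2) = 2^(3i/2)` and `x_Q = A^(-i)B^(-m) n`. -/
theorem stmt4 (g h : SchwartzMap V2 ℂ) (N : ℝ) (hN : N > 2) :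
    ∃ C > 0, ∀ (j i : ℕ) (ℓ m : ℤ) (n : ℤ × ℤ),
      ((i:ℤ) = (j:ℤ) - 1 ∨ (i:ℤ) = (j:ℤ) ∨ (i:ℤ) = (j:ℤ) + 1) →
      |ℓ| ≤ 2^j → |m| ≤ 2^i →
      ∀ x : V2,
        ‖convolution (dilA (fun y => g y) j ℓ) (shemel (fun y => h y) i m n)
            (ContinuousLinearMap.mul ℂ ℂ) volume x‖ ≤
          C * (2:ℝ) ^ (3*(i:ℝ)/2) * (1 + (2:ℝ)^i * ‖x - invBA i m (vi n)‖) ^ (-N) := by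
  obtain ⟨Cg, hCg, hg⟩ := g.exists_norm_le_one_add_norm_rpow_neg (N + 3)
  obtain ⟨Ch, hCh, hh⟩ := h.exists_norm_le_one_add_norm_rpow_neg N
  set I := ∫ s : V2, (1 + ‖s‖) ^ (-(3:ℝ))
  have hweight : Integrable fun s : V2 => (1 + ‖s‖) ^ (-(3:ℝ)) :=
    integrable_one_add_norm (by norm_num [finrank_euclideanSpace_fin])
  have hI : 0 ≤ I := integral_nonneg fun s => by positivity
  refine ⟨Cg * Ch * 6 ^ N * I + 1, by positivity, fun j i ℓ m n hij hℓ hm x => ?_⟩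
  set K := Cg * Ch * 6 ^ N * (2:ℝ) ^ (3 * (i:ℝ) / 2) * (1 + (2:ℝ)^i * ‖x - invBA i m (vi n)‖) ^ (-N)
  calc _ ≤ ∫ t, K * ((8:ℝ)^j * (1 + ‖BA j ℓ t‖) ^ (-(3:ℝ))) :=
        norm_convolution_mul_le_integral (((hweight.comp_BA j ℓ).const_mul _).const_mul K)
          (norm_dilA_mul_shemel_le (by linarith) hg hh n (by omega) hℓ hm x)
    _ = (Cg * Ch * 6 ^ N * I) * (2:ℝ) ^ (3 * (i:ℝ) / 2) *
          (1 + (2:ℝ)^i * ‖x - invBA i m (vi n)‖) ^ (-N) := by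
        rw [integral_const_mul, integral_eight_pow_mul_comp_BA (f := fun s => (1 + ‖s‖) ^ (-(3:ℝ)))]
        ring
    _ ≤ _ := by gcongr; linarith
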